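/- arXiv:2506.17706 — 6 statements merged into one kernel-verified Lean document; each statement's English description precedes it below -/
import Mathlib

section
/- Let h ≥ 1 and m ≥ 0 be integers. Then in F = ℂ(q) the q-Bernoulli numbers of order 1 satisfy the recurrence β_m^{(h+1,1)} = β_m^{(h,1)} − (1 − q^{-2})·β_{m+1}^{(h,1)}. -/
/-!
STATEMENT 0: For integers h ≥ 1 and m ≥ 0, in F = ℂ(q) the q-Bernoulli numbers of
order 1 satisfy β_m^{(h+1,1)} = β_m^{(h,1)} − (1 − q^{-2})·β_{m+1}^{(h,1)}.
-/

noncomputable section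

/-- The field F = ℂ(q) of rational functions in one variable q. -/
abbrev F : Type := RatFunc ℂ

/-- The variable q ∈ ℂ(q). -/
def q : F := RatFunc.X

/-- The q-integer [n]_q = Σ_{j=0}^{n-1} q^{-2j}. -/
def qnum (n : ℕ) : F := ∑ j ∈ Finset.range n, (q⁻¹ ^ 2) ^ j

/-- The falling factorial (a)_b = a(a−1)⋯(a−b+1), for a natural, in F. -/
def fallF (a b : ℕ) : F := ∏ j ∈ Finset.range b, ((a : F) - (j : F))

/-- The q-falling factorial ([a]_q)_b = [a]_q [a−1]_q ⋯ [a−b+1]_q (used with a ≥ b). -/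
def qfallF (a b : ℕ) : F := ∏ j ∈ Finset.range b, qnum (a - j)

/-- The q-Bernoulli polynomial of order k,
β_m^{(h,k)}(s) = (1 − q^{-2})^{-m} Σ_{i=0}^{m} C(m,i) ((i+h)_k/([i+h]_q)_k)(−s)^i,
as a polynomial in the variable s over F (s stands for q^{-2ξ}). -/
def qBernoulliPoly (m h k : ℕ) : Polynomial F :=
  Polynomial.C ((1 - q⁻¹ ^ 2)⁻¹ ^ m) *
    ∑ i ∈ Finset.range (m + 1),
      Polynomial.C ((m.choose i : F) * (fallF (i + h) k / qfallF (i + h) k)) *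
        (- Polynomial.X) ^ i

/-- The q-Bernoulli number β_m^{(h,k)} = β_m^{(h,k)}(1) (value at s = 1, i.e. ξ = 0). -/
def qBernoulliNum (m h k : ℕ) : F := (qBernoulliPoly m h k).eval 1

/-- In F = ℂ(q), 1 − q⁻² ≠ 0. -/
lemma one_sub_ne : (1 - q⁻¹ ^ 2 : F) ≠ 0 := by
  intro hcon
  have h1 : (q⁻¹ ^ 2 : F) = 1 := by linear_combination -hcon
  have hq : (q : F) ≠ 0 := RatFunc.X_ne_zero
  have h2 : (q ^ 2 : F) = 1 := by
    field_simp at h1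
    exact h1.symm
  have h3 : (Polynomial.X ^ 2 : Polynomial ℂ) = 1 := by
    apply RatFunc.algebraMap_injective ℂ
    simpa [q, RatFunc.algebraMap_X] using h2
  have := congrArg Polynomial.natDegree h3
  simp [Polynomial.natDegree_X_pow] at this

/-- Explicit evaluation of the order-1 q-Bernoulli number. -/
lemma qBernoulliNum_eq (m h : ℕ) :
    qBernoulliNum m h 1 = (1 - q⁻¹ ^ 2)⁻¹ ^ m *
      ∑ i ∈ Finset.range (m + 1),
        (m.choose i : F) * (fallF (i + h) 1 / qfallF (i + h) 1) * (-1) ^ i := by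
  simp [qBernoulliNum, qBernoulliPoly, Polynomial.eval_finset_sum]

/-- The core combinatorial identity (Pascal's rule plus reindexing). -/
lemma core (m h : ℕ) (f : ℕ → F) :
    ∑ i ∈ Finset.range (m+1), (m.choose i : F) * f (i+(h+1)) * (-1)^i
      = ∑ i ∈ Finset.range (m+1), (m.choose i : F) * f (i+h) * (-1)^i
        - ∑ i ∈ Finset.range (m+1+1), ((m+1).choose i : F) * f (i+h) * (-1)^i := by
  rw [Finset.sum_range_succ' (fun i => ((m+1).choose i : F) * f (i+h) * (-1)^i) (m+1)]
  have expand : ∀ k ∈ Finset.range (m+1),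
      ((m+1).choose (k+1) : F) * f (k+1+h) * (-1)^(k+1)
      = ((m.choose (k+1):F) * f (k+1+h) * (-1)^(k+1)
          - (m.choose k : F) * f (k+(h+1)) * (-1)^k) := by
    intro k _
    rw [Nat.choose_succ_succ, show k+1+h = k+(h+1) from by ring]
    push_cast; ring
  rw [Finset.sum_congr rfl expand, Finset.sum_sub_distrib]
  have hA : (∑ k ∈ Finset.range (m+1), (m.choose (k+1):F) * f (k+1+h) * (-1)^(k+1))
      = ∑ k ∈ Finset.range m, (m.choose (k+1):F) * f (k+1+h) * (-1)^(k+1) := by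
    rw [Finset.sum_range_succ]; simp
  have hS2 : (∑ i ∈ Finset.range (m+1), (m.choose i : F) * f (i+h) * (-1)^i)
      = (∑ k ∈ Finset.range m, (m.choose (k+1):F) * f (k+1+h) * (-1)^(k+1)) + f h := by
    rw [Finset.sum_range_succ' (fun i => (m.choose i : F) * f (i+h) * (-1)^i) m]
    simp
  rw [hA, hS2]
  simp

/-- β_m^{(h+1,1)} = β_m^{(h,1)} − (1 − q^{-2})·β_{m+1}^{(h,1)} for h ≥ 1, m ≥ 0. -/
theorem qBernoulli_order_one_rec (m h : ℕ) (hh : 1 ≤ h) :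
    qBernoulliNum m (h + 1) 1 =
      qBernoulliNum m h 1 - (1 - q⁻¹ ^ 2) * qBernoulliNum (m + 1) h 1 := by
  rw [qBernoulliNum_eq, qBernoulliNum_eq, qBernoulliNum_eq]
  set u : F := (1 - q⁻¹ ^ 2)⁻¹ with hu
  have hcancel : (1 - q⁻¹ ^ 2) * u ^ (m + 1) = u ^ m := by
    rw [pow_succ u m, ← mul_assoc, mul_comm (1 - q⁻¹ ^ 2) (u ^ m), mul_assoc, hu,
      mul_inv_cancel₀ one_sub_ne, mul_one]
  rw [← mul_assoc, hcancel, ← mul_sub]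
  congr 1
  exact core m h (fun n => fallF n 1 / qfallF n 1)

end
end

section
/- Let m ≥ 0 and h ≥ k ≥ 1 be integers. Then one has the identity of polynomials in the variable s over F = ℂ(q): β_m^{(h,k)}(s) = Σ_{i=0}^{m} C(m,i) · β_{m−i}^{(h+i,k)} · ((1 − s)/(1 − q^{-2}))^i, where β_{m−i}^{(h+i,k)} = β_{m−i}^{(h+i,k)}(1) is the q-Bernoulli number of order k. -/
/-!
STATEMENT 1: For integers m ≥ 0 and h ≥ k ≥ 1, the identity of polynomials in s over
F = ℂ(q):  β_m^{(h,k)}(s) = Σ_{i=0}^{m} C(m,i) · β_{m−i}^{(h+i,k)} · ((1−s)/(1−q^{-2}))^i.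
-/

noncomputable section

/-!
Put y = 1 − s, so that −s = y − 1. Expanding each (y − 1)^n in the definition of β_m^{(h,k)}(s)
by the binomial theorem and collecting powers of y, the identity
C(m,n) C(n,i) = C(m,i) C(m−i,n−i) turns the coefficient of y^i into C(m,i) times an alternating
sum which, up to the factor (1 − q^{-2})^{m−i}, is β_{m−i}^{(h+i,k)}(1).
-/

open Finset Polynomial

theorem sum_choose_mul_sub_one_pow {R : Type*} [CommRing R] (a : ℕ → R) (y : R) (m : ℕ) :
    ∑ n ∈ range (m + 1), (m.choose n : R) * a n * (y - 1) ^ n =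
      ∑ i ∈ range (m + 1), (m.choose i : R) *
        (∑ j ∈ range (m - i + 1), ((m - i).choose j : R) * a (i + j) * (-1) ^ j) * y ^ i := by
  let f : ℕ → ℕ → R := fun i j =>
    (m.choose (i + j) * (i + j).choose i : ℕ) * a (i + j) * (-1) ^ j * y ^ i
  have expand (n : ℕ) :
      (m.choose n : R) * a n * (y - 1) ^ n = ∑ i ∈ range (n + 1), f i (n - i) := by
    rw [sub_eq_add_neg, add_pow, mul_sum]
    refine sum_congr rfl fun i hi => ?_
    simp only [f]
    rw [Nat.add_sub_cancel' (mem_range_succ_iff.mp hi)]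
    push_cast
    ring
  rw [sum_congr rfl fun n _ => expand n, sum_range_diag_flip]
  refine sum_congr rfl fun i hi => ?_
  rw [Nat.sub_add_comm (mem_range_succ_iff.mp hi), mul_sum, sum_mul]
  refine sum_congr rfl fun j _ => ?_
  simp only [f]
  rw [Nat.choose_mul (Nat.le_add_right i j), Nat.add_sub_cancel_left]
  push_cast
  ring

theorem qBernoulliNum_eq_sum (m h k : ℕ) :
    qBernoulliNum m h k = (1 - q⁻¹ ^ 2)⁻¹ ^ m *
      ∑ j ∈ range (m + 1), (m.choose j : F) * (fallF (j + h) k / qfallF (j + h) k) * (-1) ^ j := by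
  simp [qBernoulliNum, qBernoulliPoly, eval_finsetSum]

theorem qBernoulliPoly_eq_sum_qBernoulliNum_general (m h k : ℕ) :
    qBernoulliPoly m h k =
      ∑ i ∈ Finset.range (m + 1),
        Polynomial.C ((m.choose i : F) * qBernoulliNum (m - i) (h + i) k) *
          (Polynomial.C (1 - q⁻¹ ^ 2)⁻¹ * (1 - Polynomial.X)) ^ i := by
  set c : F := (1 - q⁻¹ ^ 2)⁻¹
  set b : ℕ → F := fun n => fallF (n + h) k / qfallF (n + h) k
  have in_one_sub_X : qBernoulliPoly m h k =
      C (c ^ m) * ∑ n ∈ range (m + 1), (m.choose n : F[X]) * C (b n) * ((1 - X) - 1) ^ n := by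
    simp only [qBernoulliPoly, sub_sub_cancel_left, C_mul, map_natCast, b, c]
  rw [in_one_sub_X, sum_choose_mul_sub_one_pow, mul_sum]
  refine sum_congr rfl fun i hi => ?_
  have hshift (j : ℕ) : j + (h + i) = i + j + h := by omega
  rw [qBernoulliNum_eq_sum, ← pow_sub_mul_pow c (mem_range_succ_iff.mp hi)]
  simp only [hshift, b, map_mul, map_pow, map_sum, map_natCast, map_neg, map_one, mul_pow]
  ring

/-- β_m^{(h,k)}(s) = Σ_{i=0}^{m} C(m,i) β_{m−i}^{(h+i,k)} ((1−s)/(1−q^{-2}))^i,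
an identity of polynomials in the variable s over F, for m ≥ 0 and h ≥ k ≥ 1. -/
theorem qBernoulliPoly_eq_sum_qBernoulliNum (m h k : ℕ) (hk : 1 ≤ k) (hhk : k ≤ h) :
    qBernoulliPoly m h k =
      ∑ i ∈ Finset.range (m + 1),
        Polynomial.C ((m.choose i : F) * qBernoulliNum (m - i) (h + i) k) *
          (Polynomial.C (1 - q⁻¹ ^ 2)⁻¹ * (1 - Polynomial.X)) ^ i :=
  qBernoulliPoly_eq_sum_qBernoulliNum_general m h k

end
end

section
/- Let m ≥ 0 and h ≥ k ≥ 1 be integers. Then the q-Bernoulli number of order k decomposes as a multinomial convolution of q-Bernoulli numbers of order 1: β_m^{(h,k)} = Σ over all k-tuples (i_1,…,i_k) of nonnegative integers with i_1+⋯+i_k = m of (m!/(i_1!·i_2!⋯i_k!)) · Π_{j=1}^{k} β_{i_j}^{(h−j+1+i_1+⋯+i_{j−1}, 1)}, an identity in F = ℂ(q). -/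
/-!
STATEMENT 2: For integers m ≥ 0 and h ≥ k ≥ 1, the q-Bernoulli number of order k
decomposes as a multinomial convolution of q-Bernoulli numbers of order 1:
β_m^{(h,k)} = Σ_{i_1+⋯+i_k=m} (m!/(i_1!⋯i_k!)) Π_{j=1}^{k}
  β_{i_j}^{(h−j+1+i_1+⋯+i_{j−1}, 1)},  an identity in F = ℂ(q).
-/

noncomputable section

/-!
With `c = -(1 - q⁻²)⁻¹` and `Δ = Δ_[1]` the forward difference on functions of `a ∈ ℕ`, the
definition reads `β_m^{(h,k)} = c^m Δ^m G(h)` with `G(a) = (a)_k / ([a]_q)_k = ∏_{j<k} φ(a - j)`,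
where `φ(t) = t / [t]_q` is `qRatio`; in particular `β_m^{(s,1)} = c^m Δ^m φ(s)`. For `h ≥ k`
the function `a ↦ G(a + h)` is the product of the `k` shifts `a ↦ φ(a + h - j)`, and the
multinomial Leibniz rule `Δ^m (∏_j f_j)(x) = ∑_t (m; t) ∏_j Δ^{t_j} f_j (x + t_0 + ⋯ + t_{j-1})`
expands it into the stated convolution; the powers of `c` recombine because `∑_j t_j = m`.
-/

open Finset fwdDiff

theorem Fin.sum_Iio_succ {M : Type*} [AddCommMonoid M] {n : ℕ} (v : Fin (n + 1) → M)
    (j : Fin n) : ∑ l ∈ Iio j.succ, v l = v 0 + ∑ l ∈ Iio j, v l.succ := by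
  rw [← Ico_bot, _root_.bot_eq_zero, ← Ioo_insert_left (Fin.succ_pos j), sum_insert (by simp),
    ← Fin.map_succEmb_Iio, sum_map]
  rfl

theorem Nat.multinomial_univ_cons {k : ℕ} (a : ℕ) (t : Fin k → ℕ) :
    Nat.multinomial univ (Fin.cons a t : Fin (k + 1) → ℕ) =
      (a + ∑ j, t j).choose a * Nat.multinomial univ t := by
  rw [Fin.univ_succ, Nat.multinomial_cons]
  simp [Nat.multinomial]

theorem Finset.Nat.sum_antidiagonalTuple_succ {M : Type*} [AddCommMonoid M] (k n : ℕ)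
    (G : (Fin (k + 1) → ℕ) → M) :
    ∑ t ∈ antidiagonalTuple (k + 1) n, G t =
      ∑ p ∈ antidiagonal n, ∑ t ∈ antidiagonalTuple k p.2, G (Fin.cons p.1 t) := by
  have hval : (antidiagonalTuple (k + 1) n).val =
      (antidiagonal n).val.bind fun p => (antidiagonalTuple k p.2).val.map (Fin.cons p.1) :=
    (Multiset.coe_bind _ _).symm
  simp only [sum_eq_multiset_sum, hval, Multiset.map_bind, Multiset.sum_bind, Multiset.map_map,
    Function.comp_def]

section

variable {M R : Type*} [AddCommMonoid M] [Ring R] (h : M)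

theorem fwdDiff_mul_apply (f g : M → R) (y : M) :
    Δ_[h] (f * g) y = Δ_[h] f y * g (y + h) + f y * Δ_[h] g y := by
  simp only [fwdDiff, Pi.mul_apply, sub_mul, mul_sub]
  abel

theorem fwdDiff_iter_mul (f g : M → R) (n : ℕ) (y : M) :
    Δ_[h] ^[n] (f * g) y = ∑ ij ∈ antidiagonal n,
      (n.choose ij.1 : R) * (Δ_[h] ^[ij.1] f y * Δ_[h] ^[ij.2] g (y + ij.1 • h)) := by
  induction n generalizing f g with
  | zero => simp
  | succ n ih =>
    have hsplit : Δ_[h] (f * g) = Δ_[h] f * (fun y => g (y + h)) + f * Δ_[h] g :=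
      funext (fwdDiff_mul_apply h f g)
    rw [Function.iterate_succ_apply, hsplit, fwdDiff_iter_add, Pi.add_apply, ih, ih,
      sum_antidiagonal_choose_succ_mul (fun i j => Δ_[h] ^[i] f y * Δ_[h] ^[j] g (y + i • h)),
      add_comm]
    congr 1
    refine sum_congr rfl fun ij hij => ?_
    rw [Nat.choose_symm_of_eq_add (mem_antidiagonal.mp hij).symm, fwdDiff_iter_comp_add,
      ← Function.iterate_succ_apply, succ_nsmul, add_assoc]

theorem fwdDiff_iter_one (n : ℕ) (y : M) :
    Δ_[h] ^[n] (1 : M → R) y = if n = 0 then 1 else 0 := by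
  cases n with
  | zero => rfl
  | succ n =>
    have hzero : Δ_[h] (0 : M → R) = 0 := fwdDiff_const h 0
    rw [Function.iterate_succ_apply, Pi.one_def, fwdDiff_const, ← Pi.zero_def,
      Function.iterate_fixed hzero]
    simp

end

theorem fwdDiff_iter_prod {M R : Type*} [AddCommMonoid M] [CommRing R] (h : M) (k : ℕ) (f : Fin k → M → R) (n : ℕ) (y : M) :
    Δ_[h] ^[n] (∏ j, f j) y = ∑ t ∈ Finset.Nat.antidiagonalTuple k n,
      (Nat.multinomial univ t : R) * ∏ j, Δ_[h] ^[t j] (f j) (y + (∑ l ∈ Iio j, t l) • h) := by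
  induction k generalizing n y with
  | zero => cases n <;> simp [fwdDiff_iter_one]
  | succ k ih =>
    rw [Fin.prod_univ_succ, fwdDiff_iter_mul, Finset.Nat.sum_antidiagonalTuple_succ]
    refine sum_congr rfl fun ab hab => ?_
    rw [ih, mul_sum, mul_sum]
    refine sum_congr rfl fun t ht => ?_
    rw [Nat.multinomial_univ_cons, Finset.Nat.mem_antidiagonalTuple.mp ht,
      mem_antidiagonal.mp hab, Fin.prod_univ_succ]
    have hIio : Iio (0 : Fin (k + 1)) = ∅ := by rw [← _root_.bot_eq_zero, Iio_bot]
    simp only [Fin.cons_zero, Fin.cons_succ, Fin.sum_Iio_succ, hIio, sum_empty, zero_nsmul,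
      add_zero, add_nsmul, add_assoc, Nat.cast_mul]
    ring

theorem neg_one_pow_mul_fwdDiff_iter_eq_sum {R : Type*} [CommRing R] (f : ℕ → R) (m x : ℕ) :
    (-1) ^ m * Δ_[1] ^[m] f x = ∑ i ∈ range (m + 1), (m.choose i : R) * f (i + x) * (-1) ^ i := by
  rw [fwdDiff_iter_eq_sum_shift, mul_sum]
  refine sum_congr rfl fun i hi => ?_
  obtain ⟨d, rfl⟩ := Nat.exists_eq_add_of_le (Nat.lt_succ_iff.mp (mem_range.mp hi))
  rw [Nat.add_sub_cancel_left, zsmul_eq_mul, smul_eq_mul, mul_one, add_comm x, pow_add]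
  push_cast
  ring_nf
  simp

def qRatio (t : ℕ) : F := t / qnum t

theorem fallF_div_qfallF_eq_prod {a k : ℕ} (hka : k ≤ a) :
    fallF a k / qfallF a k = ∏ j ∈ range k, qRatio (a - j) := by
  rw [fallF, qfallF, ← prod_div_distrib]
  refine prod_congr rfl fun j hj => ?_
  rw [qRatio, Nat.cast_sub (by grind)]

theorem fallF_one_div_qfallF_one (a : ℕ) : fallF a 1 / qfallF a 1 = qRatio a := by
  simp [fallF, qfallF, qRatio]

theorem qBernoulliNum_eq_fwdDiff_iter (m h k : ℕ) :
    qBernoulliNum m h k =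
      (-(1 - q⁻¹ ^ 2)⁻¹) ^ m * Δ_[1] ^[m] (fun a => fallF a k / qfallF a k) h := by
  rw [neg_pow, mul_assoc, mul_left_comm, neg_one_pow_mul_fwdDiff_iter_eq_sum, qBernoulliNum,
    qBernoulliPoly]
  simp [Polynomial.eval_finsetSum]

theorem qBernoulliNum_one_eq_fwdDiff_iter (m h : ℕ) :
    qBernoulliNum m h 1 = (-(1 - q⁻¹ ^ 2)⁻¹) ^ m * Δ_[1] ^[m] qRatio h := by
  simp only [qBernoulliNum_eq_fwdDiff_iter, fallF_one_div_qfallF_one]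

theorem fallF_add_div_qfallF_add_eq_prod {h k : ℕ} (hkh : k ≤ h) :
    (fun a => fallF (a + h) k / qfallF (a + h) k) =
      ∏ j : Fin k, fun a => qRatio (a + (h - j)) := by
  funext a
  rw [prod_apply, fallF_div_qfallF_eq_prod (by omega), prod_range]
  refine prod_congr rfl fun j _ => ?_
  rw [Nat.add_sub_assoc (by omega)]

theorem qBernoulliNum_multinomial_general (m h k : ℕ) (hhk : k ≤ h) :
    qBernoulliNum m h k =
      ∑ i ∈ Finset.Nat.antidiagonalTuple k m,
        (Nat.multinomial Finset.univ i : F) *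
          ∏ j : Fin k,
            qBernoulliNum (i j) (h - (j.val + 1) + 1 + ∑ l ∈ Finset.Iio j, i l) 1 := by
  set c : F := -(1 - q⁻¹ ^ 2)⁻¹
  have hfactor (t : Fin k → ℕ) (j : Fin k) :
      qBernoulliNum (t j) (h - (j.val + 1) + 1 + ∑ l ∈ Iio j, t l) 1 =
        c ^ t j * Δ_[1] ^[t j] (fun a => qRatio (a + (h - j))) (0 + (∑ l ∈ Iio j, t l) • 1) := by
    have hjh : j.val < h := j.isLt.trans_le hhk
    rw [qBernoulliNum_one_eq_fwdDiff_iter, fwdDiff_iter_comp_add, smul_eq_mul, mul_one,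
      show h - (j.val + 1) + 1 + ∑ l ∈ Iio j, t l = 0 + ∑ l ∈ Iio j, t l + (h - j) by omega]
  calc qBernoulliNum m h k
      = c ^ m * Δ_[1] ^[m] (fun a => fallF (a + h) k / qfallF (a + h) k) 0 := by
        rw [qBernoulliNum_eq_fwdDiff_iter,
          fwdDiff_iter_comp_add 1 (fun a => fallF a k / qfallF a k), zero_add]
    _ = _ := by
        rw [fallF_add_div_qfallF_add_eq_prod hhk, fwdDiff_iter_prod, mul_sum]
        refine sum_congr rfl fun t ht => ?_
        rw [prod_congr rfl fun j _ => hfactor t j, prod_mul_distrib, prod_pow_eq_pow_sum,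
          Finset.Nat.mem_antidiagonalTuple.mp ht]
        ring

/-- β_m^{(h,k)} = Σ over k-tuples (i_1,…,i_k) with i_1+⋯+i_k = m of the multinomial
coefficient m!/(i_1!⋯i_k!) times Π_{j=1}^{k} β_{i_j}^{(h−j+1+i_1+⋯+i_{j−1},1)}.
Here tuples are 0-indexed: the j-th factor (j : Fin k, 1-indexed j.val + 1) has
superscript h − (j.val+1) + 1 + Σ_{l<j} i_l. -/
theorem qBernoulliNum_multinomial (m h k : ℕ) (hk : 1 ≤ k) (hhk : k ≤ h) :
    qBernoulliNum m h k =
      ∑ i ∈ Finset.Nat.antidiagonalTuple k m,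
        (Nat.multinomial Finset.univ i : F) *
          ∏ j : Fin k,
            qBernoulliNum (i j) (h - (j.val + 1) + 1 + ∑ l ∈ Finset.Iio j, i l) 1 :=
  qBernoulliNum_multinomial_general m h k hhk

end
end

section
/- Let m ≥ 0 and h ≥ k ≥ 1 be integers and ξ ∈ ℝ. For real q > 0, q ≠ 1, let β_m^{(h,k)}(ξ; q) = (1 − q^{-2})^{-m} Σ_{i=0}^{m} C(m,i) ((i+h)_k / ([i+h]_q)_k) (−q^{-2ξ})^i. Then as q tends to 1 within the set of positive reals different from 1, β_m^{(h,k)}(ξ; q) tends to the order-k Bernoulli polynomial value B_m^{(k)}(ξ) = Σ_{i=0}^{m} C(m,i) ξ^i b^{(k)}_{m−i}, where b^{(k)}_n = Σ over k-tuples (n_1,…,n_k) of nonnegative integers with n_1+⋯+n_k = n of (n!/(n_1!⋯n_k!)) Π_{j=1}^{k} B_{n_j}. In particular the limit does not depend on h. -/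
/-!
Put `t = -2 log q`, so that `q⁻² = eᵗ` and `[n]_q = (e^{nt} - 1)/(eᵗ - 1)`. With
`E(t) = (eᵗ - 1)/t` one finds `(eᵗ - 1)^m β_m^{(h,k)}(ξ; q) = Δ^m G(·, t)(0)`, the `m`-th
forward difference in `x` of `G(x, t) = e^{ξxt} ∏_{j<k} E(t)/E((x + h - j)t)`.

The `tⁿ`-coefficient of the Taylor series of `G(x, t)` in `t` is a polynomial in `x` of degree
`≤ n`, whose `xⁿ`-coefficient is the `tⁿ`-coefficient of `e^{ξt} (t/(eᵗ - 1))^k`. Since `Δ^m`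
kills polynomials of degree `< m` and maps `x^m` to `m!`, this gives
`Δ^m G(·, t)(0) = m! [t^m] (e^{ξt} (t/(eᵗ - 1))^k) t^m + O(t^{m+1})
  = B_m^{(k)}(ξ) t^m + O(t^{m+1})`, while `(eᵗ - 1)^m ∼ t^m`.
-/

noncomputable section

/-- The q-integer [n]_q = (1 − q^{-2n})/(1 − q^{-2}) for real q. -/
def qnumR (q : ℝ) (n : ℕ) : ℝ := (1 - q⁻¹ ^ (2 * n)) / (1 - q⁻¹ ^ 2)

/-- The real falling factorial (a)_b = a(a−1)⋯(a−b+1), a natural. -/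
def fallR (a b : ℕ) : ℝ := ∏ j ∈ Finset.range b, ((a : ℝ) - j)

/-- The q-falling factorial ([a]_q)_b = [a]_q[a−1]_q⋯[a−b+1]_q for real q
(used with a ≥ b). -/
def qfallR (q : ℝ) (a b : ℕ) : ℝ := ∏ j ∈ Finset.range b, qnumR q (a - j)

/-- The q-Bernoulli polynomial value β_m^{(h,k)}(ξ; q) for real q > 0 (q^{-2ξ} is a
real power). -/
def qBernoulliPolyR (m h k : ℕ) (ξ : ℝ) (q : ℝ) : ℝ :=
  ((1 - q⁻¹ ^ 2)⁻¹) ^ m *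
    ∑ i ∈ Finset.range (m + 1),
      (m.choose i : ℝ) * (fallR (i + h) k / qfallR q (i + h) k) * (-(q ^ (-2 * ξ))) ^ i

/-- The order-k Bernoulli number b^{(k)}_n = Σ_{n_1+⋯+n_k=n} (n!/(n_1!⋯n_k!)) Π_j B_{n_j},
where B denotes the classical Bernoulli numbers (B_1 = −1/2). -/
def bernoulliOrder (k n : ℕ) : ℝ :=
  ∑ p ∈ Finset.Nat.antidiagonalTuple k n,
    (Nat.multinomial Finset.univ p : ℝ) * ∏ j : Fin k, ((bernoulli (p j) : ℚ) : ℝ)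

/-- The order-k Bernoulli polynomial B_m^{(k)}(ξ) = Σ_{i=0}^m C(m,i) ξ^i b^{(k)}_{m−i}. -/
def bernoulliPolyOrder (k m : ℕ) (ξ : ℝ) : ℝ :=
  ∑ i ∈ Finset.range (m + 1), (m.choose i : ℝ) * ξ ^ i * bernoulliOrder k (m - i)

open Filter Asymptotics Finset PowerSeries Topology
open scoped Polynomial Nat

section Expansion

variable {𝕜 : Type*} [NormedField 𝕜]

/-- `F` is the asymptotic Taylor series of `f` at `0`. Only a punctured neighbourhood of `0`
matters, so junk values such as that of `(eᵗ - 1)/t` at `t = 0` play no role. -/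
def HasExpansion (f : 𝕜 → 𝕜) (F : 𝕜⟦X⟧) : Prop :=
  ∀ n, (fun t => f t - (trunc n F).eval t) =O[𝓝[≠] 0] (· ^ n)

lemma Polynomial.isBigO_one_eval (p : 𝕜[X]) :
    (fun t => p.eval t) =O[𝓝[≠] 0] (fun _ => (1 : 𝕜)) :=
  ((p.continuous.tendsto 0).isBigO_one 𝕜).mono nhdsWithin_le_nhds

lemma isBigO_eval_sub_eval_of_trunc_eq {p q : 𝕜[X]} {n : ℕ}
    (h : trunc n (p : 𝕜⟦X⟧) = trunc n (q : 𝕜⟦X⟧)) :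
    (fun t => p.eval t - q.eval t) =O[𝓝[≠] 0] (· ^ n) := by
  obtain ⟨r, hr⟩ : Polynomial.X ^ n ∣ p - q := by
    refine Polynomial.X_pow_dvd_iff.mpr fun d hd => ?_
    simpa [coeff_trunc, hd, sub_eq_zero] using congr_arg (Polynomial.coeff · d) h
  have := (isBigO_refl (· ^ n) (𝓝[≠] (0 : 𝕜))).mul r.isBigO_one_eval
  simpa [← Polynomial.eval_sub, hr] using this

lemma hasExpansion_const (a : 𝕜) : HasExpansion (fun _ => a) (C a) := by
  rintro (_ | n)
  · simpa using isBigO_const_const a (one_ne_zero' 𝕜) _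
  · simpa [trunc_C] using isBigO_zero _ _

namespace HasExpansion

variable {f g : 𝕜 → 𝕜} {F G : 𝕜⟦X⟧}

lemma isBigO_one (hf : HasExpansion f F) : f =O[𝓝[≠] 0] (fun _ => (1 : 𝕜)) := by
  simpa using hf 0

lemma tendsto (hf : HasExpansion f F) : Tendsto f (𝓝[≠] 0) (𝓝 (constantCoeff F)) := by
  have h1 : (fun t => f t - constantCoeff F) =O[𝓝[≠] 0] (fun t => t) := by
    simpa [trunc_one_left] using hf 1
  have h2 := (h1.trans_tendsto (tendsto_id.mono_left nhdsWithin_le_nhds)).add_const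
    (constantCoeff F)
  simpa using h2

lemma add (hf : HasExpansion f F) (hg : HasExpansion g G) :
    HasExpansion (fun t => f t + g t) (F + G) := fun n => by
  simpa [add_sub_add_comm] using (hf n).add (hg n)

lemma sub (hf : HasExpansion f F) (hg : HasExpansion g G) :
    HasExpansion (fun t => f t - g t) (F - G) := fun n => by
  simpa [sub_sub_sub_comm] using (hf n).sub (hg n)

lemma mul (hf : HasExpansion f F) (hg : HasExpansion g G) :
    HasExpansion (fun t => f t * g t) (F * G) := fun n => by
  set P := trunc n F
  set Q := trunc n G
  have hPQ :
      trunc n ((P * Q : 𝕜[X]) : 𝕜⟦X⟧) = trunc n ((trunc n (F * G) : 𝕜[X]) : 𝕜⟦X⟧) := by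
    rw [Polynomial.coe_mul, trunc_trunc_mul_trunc, trunc_trunc]
  -- `fg - trunc n (FG) = (f - P) g + P (g - Q) + (PQ - trunc n (FG))`
  have h1 : (fun t => (f t - P.eval t) * g t) =O[𝓝[≠] 0] (· ^ n) := by
    simpa using (hf n).mul hg.isBigO_one
  have h2 : (fun t => P.eval t * (g t - Q.eval t)) =O[𝓝[≠] 0] (· ^ n) := by
    simpa using P.isBigO_one_eval.mul (hg n)
  have := (h1.add h2).add (isBigO_eval_sub_eval_of_trunc_eq hPQ)
  refine this.congr_left fun t => ?_
  simp only [Polynomial.eval_mul]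
  ring

lemma const_mul (hf : HasExpansion f F) (a : 𝕜) :
    HasExpansion (fun t => a * f t) (a • F) := by
  simpa [smul_eq_C_mul] using (hasExpansion_const a).mul hf

lemma inv (hf : HasExpansion f F) (hFG : F * G = 1) : HasExpansion (fun t => (f t)⁻¹) G :=
  fun n => by
  have hF : constantCoeff F ≠ 0 :=
    left_ne_zero_of_mul_eq_one (by simpa using congr_arg constantCoeff hFG)
  set P := trunc n F
  set Q := trunc n G
  have hPQ : trunc n ((1 : 𝕜[X]) : 𝕜⟦X⟧) = trunc n ((P * Q : 𝕜[X]) : 𝕜⟦X⟧) := by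
    rw [Polynomial.coe_mul, trunc_trunc_mul_trunc, hFG, Polynomial.coe_one]
  -- `f⁻¹ - Q = f⁻¹ (1 - fQ)` and `1 - fQ = (1 - PQ) - (f - P) Q`
  have h1 : (fun t => 1 - f t * Q.eval t) =O[𝓝[≠] 0] (· ^ n) := by
    have h2 : (fun t => (f t - P.eval t) * Q.eval t) =O[𝓝[≠] 0] (· ^ n) := by
      simpa using (hf n).mul Q.isBigO_one_eval
    have := (isBigO_eval_sub_eval_of_trunc_eq hPQ).sub h2
    refine this.congr_left fun t => ?_
    simp only [Polynomial.eval_mul, Polynomial.eval_one]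
    ring
  have h2 := ((hf.tendsto.inv₀ hF).isBigO_one 𝕜).mul h1
  refine h2.congr' ?_ (by simp)
  filter_upwards [hf.tendsto.eventually_ne hF] with t ht
  field_simp

lemma div_id (hf : HasExpansion f (X * G)) : HasExpansion (fun t => f t / t) G :=
  fun n => by
  have htrunc : trunc (n + 1) (X * G) = Polynomial.X * trunc n G := by
    ext (_ | d) <;> simp [coeff_trunc, Polynomial.coeff_X_mul]
  have := (hf (n + 1)).mul (isBigO_refl (fun t : 𝕜 => t⁻¹) _)
  refine this.congr' ?_ ?_ <;> filter_upwards [self_mem_nhdsWithin] with t (ht : t ≠ 0)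
  · simp only [htrunc, Polynomial.eval_mul, Polynomial.eval_X]
    field_simp
  · field_simp
    ring

lemma div_pow (m : ℕ) (hf : HasExpansion f (X ^ m * G)) :
    HasExpansion (fun t => f t / t ^ m) G := by
  induction m generalizing f with
  | zero => simpa using hf
  | succ m ih =>
    have := ih (div_id (by rwa [← mul_assoc, ← pow_succ']))
    simpa [div_div, pow_succ'] using this

lemma tendsto_div_pow {m : ℕ} (hf : HasExpansion f F) (hF : ∀ i < m, coeff i F = 0) :
    Tendsto (fun t => f t / t ^ m) (𝓝[≠] 0) (𝓝 (coeff m F)) := by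
  have htrunc : trunc m F = 0 := by
    ext i
    simp +contextual [coeff_trunc, hF]
  have hF' := eq_X_pow_mul_shift_add_trunc m F
  rw [htrunc, Polynomial.coe_zero, add_zero] at hF'
  rw [hF'] at hf
  simpa using (hf.div_pow m).tendsto

lemma comp_mul (hf : HasExpansion f F) {c : 𝕜} (hc : c ≠ 0) :
    HasExpansion (fun t => f (c * t)) (rescale c F) := fun n => by
  have hlim : Tendsto (c * ·) (𝓝[≠] 0) (𝓝[≠] 0) :=
    tendsto_nhdsWithin_of_tendsto_nhds_of_eventually_within _
      ((continuous_const_mul c).tendsto' 0 0 (mul_zero c) |>.mono_left nhdsWithin_le_nhds)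
      (by filter_upwards [self_mem_nhdsWithin] with t ht using mul_ne_zero hc ht)
  have heval : ∀ t, (trunc n (rescale c F)).eval t = (trunc n F).eval (c * t) := fun t => by
    simp only [Polynomial.eval, eval₂_trunc_eq_sum_range, coeff_rescale, RingHom.id_apply,
      mul_pow]
    exact sum_congr rfl fun _ _ => by ring
  have hpow : (fun t => (c * t) ^ n) =O[𝓝[≠] 0] (· ^ n) := by
    simpa [mul_pow] using isBigO_const_mul_self (c ^ n) (· ^ n) _
  simpa [heval, Function.comp_def] using ((hf n).comp_tendsto hlim).trans hpow

end HasExpansion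

lemma hasExpansion_sum {ι : Type*} (s : Finset ι) {f : ι → 𝕜 → 𝕜} {F : ι → 𝕜⟦X⟧}
    (h : ∀ i ∈ s, HasExpansion (f i) (F i)) :
    HasExpansion (fun t => ∑ i ∈ s, f i t) (∑ i ∈ s, F i) := by
  classical
  induction s using Finset.induction_on with
  | empty => simpa using hasExpansion_const (0 : 𝕜)
  | insert a s ha ih =>
    simp_rw [sum_insert ha]
    exact (h a (mem_insert_self a s)).add (ih fun i hi => h i (mem_insert_of_mem hi))

lemma hasExpansion_prod {ι : Type*} (s : Finset ι) {f : ι → 𝕜 → 𝕜} {F : ι → 𝕜⟦X⟧}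
    (h : ∀ i ∈ s, HasExpansion (f i) (F i)) :
    HasExpansion (fun t => ∏ i ∈ s, f i t) (∏ i ∈ s, F i) := by
  classical
  induction s using Finset.induction_on with
  | empty => simpa using hasExpansion_const (1 : 𝕜)
  | insert a s ha ih =>
    simp_rw [prod_insert ha]
    exact (h a (mem_insert_self a s)).mul (ih fun i hi => h i (mem_insert_of_mem hi))

end Expansion

section RealExp

lemma hasExpansion_exp : HasExpansion Real.exp (exp ℝ) := by
  rintro (_ | n)
  · simpa using ((Real.continuous_exp.tendsto 0).isBigO_one ℝ).mono nhdsWithin_le_nhds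
  · refine IsBigO.of_bound ((n + 2 : ℕ) / ((n + 1)! * (n + 1 : ℕ))) ?_
    have hsmall : ∀ᶠ t in 𝓝[≠] (0 : ℝ), |t| ≤ 1 :=
      (((continuous_abs.tendsto' 0 0 abs_zero).eventually_le_const one_pos)).filter_mono
        nhdsWithin_le_nhds
    filter_upwards [hsmall] with t ht
    have heval : (trunc (n + 1) (exp ℝ)).eval t = ∑ i ∈ range (n + 1), t ^ i / i ! := by
      simp only [Polynomial.eval, eval₂_trunc_eq_sum_range, coeff_exp, RingHom.id_apply]
      exact sum_congr rfl fun _ _ => by simp [div_eq_inv_mul]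
    rw [heval, Real.norm_eq_abs, norm_pow, Real.norm_eq_abs, mul_comm]
    exact Real.exp_bound ht n.succ_pos

lemma hasExpansion_exp_mul (c : ℝ) :
    HasExpansion (fun t => Real.exp (c * t)) (rescale c (exp ℝ)) := by
  rcases eq_or_ne c 0 with rfl | hc
  · simpa [rescale_zero] using hasExpansion_const (1 : ℝ)
  · exact hasExpansion_exp.comp_mul hc

end RealExp

section Bernoulli

def expSubOneDiv (t : ℝ) : ℝ := (Real.exp t - 1) / t

def expSubOneDivSeries : ℝ⟦X⟧ := mk fun n => coeff (n + 1) (exp ℝ)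

lemma X_mul_expSubOneDivSeries : X * expSubOneDivSeries = exp ℝ - 1 := by
  ext (_ | n) <;> simp [expSubOneDivSeries, coeff_succ_X_mul]

lemma constantCoeff_expSubOneDivSeries : constantCoeff expSubOneDivSeries = 1 := by
  simp [expSubOneDivSeries, ← coeff_zero_eq_constantCoeff_apply]

lemma expSubOneDivSeries_mul_bernoulliPowerSeries :
    expSubOneDivSeries * bernoulliPowerSeries ℝ = 1 := by
  refine mul_left_cancel₀ (X_ne_zero (R := ℝ)) ?_
  rw [mul_one, ← mul_assoc, X_mul_expSubOneDivSeries, mul_comm,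
    bernoulliPowerSeries_mul_exp_sub_one]

lemma hasExpansion_expSubOneDiv : HasExpansion expSubOneDiv expSubOneDivSeries := by
  have h : HasExpansion (fun t => Real.exp t - 1) (X * expSubOneDivSeries) := by
    simpa [X_mul_expSubOneDivSeries] using hasExpansion_exp.sub (hasExpansion_const 1)
  exact h.div_id

lemma hasExpansion_inv_expSubOneDiv_mul {c : ℝ} (hc : c ≠ 0) :
    HasExpansion (fun t => (expSubOneDiv (c * t))⁻¹) (rescale c (bernoulliPowerSeries ℝ)) :=
  (hasExpansion_expSubOneDiv.comp_mul hc).inv <| by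
    rw [← map_mul, expSubOneDivSeries_mul_bernoulliPowerSeries, map_one]

lemma bernoulliOrder_eq_factorial_mul_coeff (k n : ℕ) :
    bernoulliOrder k n = n ! * coeff n (bernoulliPowerSeries ℝ ^ k) := by
  classical
  have hpi : ∑ l ∈ finsuppAntidiag (univ : Finset (Fin k)) n,
        ∏ j, coeff (l j) (bernoulliPowerSeries ℝ) =
      ∑ p ∈ piAntidiag (univ : Finset (Fin k)) n, ∏ j, coeff (p j) (bernoulliPowerSeries ℝ) := by
    rw [finsuppAntidiag, sum_map, ← sum_attach (piAntidiag univ n)]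
    rfl
  rw [← Fin.prod_const k (bernoulliPowerSeries ℝ), coeff_prod, hpi,
    piAntidiag_univ_fin_eq_antidiagonalTuple, bernoulliOrder, mul_sum]
  refine sum_congr rfl fun p hp => ?_
  rw [Nat.mem_antidiagonalTuple] at hp
  have hmult := Nat.multinomial_spec univ p
  rw [hp] at hmult
  simp only [bernoulliPowerSeries, coeff_mk, map_div₀, eq_ratCast, Rat.cast_natCast,
    prod_div_distrib]
  rw [← hmult]
  push_cast
  field_simp

lemma factorial_mul_coeff_exp_mul_bernoulliPowerSeries_pow (k m : ℕ) (ξ : ℝ) :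
    m ! * coeff m (rescale ξ (exp ℝ) * bernoulliPowerSeries ℝ ^ k) =
      bernoulliPolyOrder k m ξ := by
  rw [coeff_mul, Nat.sum_antidiagonal_eq_sum_range_succ_mk, bernoulliPolyOrder, mul_sum]
  refine sum_congr rfl fun i hi => ?_
  have hi : i ≤ m := Nat.lt_succ_iff.mp (mem_range.mp hi)
  rw [bernoulliOrder_eq_factorial_mul_coeff, coeff_rescale, coeff_exp, Nat.cast_choose ℝ hi]
  simp only [one_div, map_inv₀, map_natCast]
  field_simp

end Bernoulli

section LeadingPart

variable {R : Type*} [CommRing R]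

lemma Polynomial.sum_range_choose_mul_eval {P : R[X]} {m : ℕ} (hP : P.natDegree ≤ m) :
    ∑ i ∈ range (m + 1), ((-1) ^ (m - i) * m.choose i : R) * P.eval (i : R) =
      m ! * P.coeff m := by
  have hdiff := fwdDiff_iter_eq_sum_shift 1 P.eval m 0
  simp only [zero_add, nsmul_one, zsmul_eq_mul] at hdiff
  push_cast at hdiff
  rw [← hdiff]
  rcases hP.lt_or_eq with hlt | rfl
  · rw [Polynomial.fwdDiff_iter_eq_zero_of_degree_lt hlt,
      Polynomial.coeff_eq_zero_of_natDegree_lt hlt]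
    simp
  · rw [Polynomial.fwdDiff_iter_degree_eq_factorial]
    simp [mul_comm]

/-- Writing `Φ = ∑ pₙ(Y) Xⁿ`, every monomial `Yʲ Xⁿ` of `Φ` has `j ≤ n`, and `u` collects the
monomials with `j = n`, evaluated at `Y = 1`. -/
def HasLeadingPart (Φ : R[X]⟦X⟧) (u : R⟦X⟧) : Prop :=
  ∀ n, (coeff n Φ).natDegree ≤ n ∧ (coeff n Φ).coeff n = coeff n u

namespace HasLeadingPart

variable {Φ Ψ : R[X]⟦X⟧} {u v : R⟦X⟧}

lemma mul (hΦ : HasLeadingPart Φ u) (hΨ : HasLeadingPart Ψ v) :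
    HasLeadingPart (Φ * Ψ) (u * v) := fun n => by
  simp only [coeff_mul]
  constructor
  · refine Polynomial.natDegree_sum_le_of_forall_le _ _ fun p hp => ?_
    rw [← mem_antidiagonal.mp hp]
    exact Polynomial.natDegree_mul_le_of_le (hΦ p.1).1 (hΨ p.2).1
  · rw [Polynomial.finsetSum_coeff]
    refine sum_congr rfl fun p hp => ?_
    rw [← mem_antidiagonal.mp hp, Polynomial.coeff_mul_add_eq_of_natDegree_le (hΦ p.1).1
      (hΨ p.2).1, (hΦ p.1).2, (hΨ p.2).2]

lemma prod {ι : Type*} (s : Finset ι) {Φ : ι → R[X]⟦X⟧} {u : ι → R⟦X⟧}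
    (h : ∀ i ∈ s, HasLeadingPart (Φ i) (u i)) :
    HasLeadingPart (∏ i ∈ s, Φ i) (∏ i ∈ s, u i) := by
  classical
  induction s using Finset.induction_on with
  | empty =>
    intro n
    rw [prod_empty, prod_empty, coeff_one, coeff_one]
    split_ifs with hn <;> simp [hn]
  | insert a s ha ih =>
    simp_rw [prod_insert ha]
    exact (h a (mem_insert_self a s)).mul (ih fun i hi => h i (mem_insert_of_mem hi))

lemma coeff_sum_choose_smul_map_eval (hΦ : HasLeadingPart Φ u) {m n : ℕ} (hn : n ≤ m) :
    coeff n (∑ i ∈ range (m + 1),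
        ((-1) ^ (m - i) * m.choose i : R) • Φ.map (Polynomial.evalRingHom (i : R))) =
      if n = m then m ! * coeff m u else 0 := by
  simp only [map_sum, coeff_smul, coeff_map, Polynomial.coe_evalRingHom, smul_eq_mul]
  rw [Polynomial.sum_range_choose_mul_eval ((hΦ n).1.trans hn)]
  split_ifs with h
  · rw [h, (hΦ m).2]
  · rw [Polynomial.coeff_eq_zero_of_natDegree_lt ((hΦ n).1.trans_lt (lt_of_le_of_ne hn h)),
      mul_zero]

end HasLeadingPart

lemma hasLeadingPart_map_C (F : R⟦X⟧) :
    HasLeadingPart (F.map Polynomial.C) (C (constantCoeff F)) := fun n => by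
  rcases n with _ | n <;> simp [coeff_C]

lemma hasLeadingPart_rescale_map_C {p : R[X]} (hp : p.natDegree ≤ 1) (F : R⟦X⟧) :
    HasLeadingPart (rescale p (F.map Polynomial.C)) (rescale (p.coeff 1) F) := fun n => by
  simp only [coeff_rescale, coeff_map]
  constructor
  · refine (Polynomial.natDegree_mul_C_le _ _).trans ?_
    simpa using Polynomial.natDegree_pow_le_of_le n hp
  · rw [Polynomial.coeff_mul_C, ← Polynomial.coeff_pow_of_natDegree_le hp, mul_one]

lemma map_evalRingHom_rescale_map_C (p : R[X]) (x : R) (F : R⟦X⟧) :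
    (rescale p (F.map Polynomial.C)).map (Polynomial.evalRingHom x) = rescale (p.eval x) F := by
  ext n
  simp [coeff_rescale]

lemma map_evalRingHom_map_C (x : R) (F : R⟦X⟧) :
    (F.map Polynomial.C).map (Polynomial.evalRingHom x) = F := by
  ext n
  simp

end LeadingPart

section QBernoulli

/-- `G(x, t)` of the header. -/
def qBernoulliTerm (ξ : ℝ) (h k : ℕ) (x t : ℝ) : ℝ :=
  Real.exp (ξ * x * t) * ∏ j ∈ range k, expSubOneDiv t * (expSubOneDiv ((x + (h - j)) * t))⁻¹

/-- `G(x, t)` as a power series in `t` over `ℝ[x]`. -/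
def qBernoulliTermSeries (ξ : ℝ) (h k : ℕ) : ℝ[X]⟦X⟧ :=
  rescale (Polynomial.C ξ * Polynomial.X) ((exp ℝ).map Polynomial.C) *
    ∏ j ∈ range k, (expSubOneDivSeries.map Polynomial.C *
      rescale (Polynomial.X + Polynomial.C ((h : ℝ) - j))
        ((bernoulliPowerSeries ℝ).map Polynomial.C))

lemma hasLeadingPart_qBernoulliTermSeries (ξ : ℝ) (h k : ℕ) :
    HasLeadingPart (qBernoulliTermSeries ξ h k)
      (rescale ξ (exp ℝ) * bernoulliPowerSeries ℝ ^ k) := by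
  have hexp := hasLeadingPart_rescale_map_C
    ((Polynomial.natDegree_C_mul_le ξ _).trans Polynomial.natDegree_X_le) (exp ℝ)
  have hfactor := fun j : ℕ => (hasLeadingPart_map_C expSubOneDivSeries).mul
    (hasLeadingPart_rescale_map_C (Polynomial.natDegree_X_add_C ((h : ℝ) - j)).le
      (bernoulliPowerSeries ℝ))
  have := hexp.mul (HasLeadingPart.prod (range k) fun j _ => hfactor j)
  simp only [Polynomial.coeff_C_mul_X, Polynomial.coeff_add, Polynomial.coeff_X_one,
    Polynomial.coeff_C_of_ne_zero one_ne_zero, add_zero, rescale_one, RingHom.id_apply,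
    constantCoeff_expSubOneDivSeries, map_one, one_mul, prod_const, card_range, if_true] at this
  exact this

lemma hasExpansion_qBernoulliTerm (ξ : ℝ) {h k : ℕ} (hkh : k ≤ h) (i : ℕ) :
    HasExpansion (qBernoulliTerm ξ h k i)
      ((qBernoulliTermSeries ξ h k).map (Polynomial.evalRingHom (i : ℝ))) := by
  have hprod := hasExpansion_prod (range k) fun j hj =>
    have hjh : (j : ℝ) < h := by exact_mod_cast (mem_range.mp hj).trans_le hkh
    hasExpansion_expSubOneDiv.mul
      (hasExpansion_inv_expSubOneDiv_mul (c := (i : ℝ) + (h - j)) (by positivity))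
  have hser : (qBernoulliTermSeries ξ h k).map (Polynomial.evalRingHom (i : ℝ)) =
      rescale (ξ * i) (exp ℝ) * ∏ j ∈ range k,
        (expSubOneDivSeries * rescale ((i : ℝ) + (h - j)) (bernoulliPowerSeries ℝ)) := by
    simp only [qBernoulliTermSeries, map_mul, map_prod, map_evalRingHom_rescale_map_C,
      map_evalRingHom_map_C, Polynomial.eval_mul, Polynomial.eval_add, Polynomial.eval_C,
      Polynomial.eval_X]
  rw [hser]
  exact (hasExpansion_exp_mul (ξ * i)).mul hprod

/-- `Δ^m G(·, t)(0)`. -/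
def qBernoulliFwdDiff (m h k : ℕ) (ξ t : ℝ) : ℝ :=
  ∑ i ∈ range (m + 1), ((-1) ^ (m - i) * m.choose i : ℝ) * qBernoulliTerm ξ h k i t

lemma tendsto_qBernoulliFwdDiff_div_pow (m : ℕ) {h k : ℕ} (hkh : k ≤ h) (ξ : ℝ) :
    Tendsto (fun t => qBernoulliFwdDiff m h k ξ t / t ^ m) (𝓝[≠] 0)
      (𝓝 (bernoulliPolyOrder k m ξ)) := by
  have hexp := hasExpansion_sum (range (m + 1)) fun i _ =>
    (hasExpansion_qBernoulliTerm ξ hkh i).const_mul ((-1) ^ (m - i) * m.choose i)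
  have hcoeff := fun n (hn : n ≤ m) =>
    (hasLeadingPart_qBernoulliTermSeries ξ h k).coeff_sum_choose_smul_map_eval hn
  have := hexp.tendsto_div_pow fun n hn => by rw [hcoeff n hn.le, if_neg hn.ne]
  rwa [hcoeff m le_rfl, if_pos rfl, factorial_mul_coeff_exp_mul_bernoulliPowerSeries_pow] at this

end QBernoulli

section Identity

variable {q t : ℝ}

lemma natCast_div_qnumR (hqt : q⁻¹ ^ 2 = Real.exp t) (ht : t ≠ 0) (n : ℕ) :
    (n : ℝ) / qnumR q n = expSubOneDiv t * (expSubOneDiv (n * t))⁻¹ := by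
  have ht' : 1 - Real.exp t ≠ 0 := by
    rwa [sub_ne_zero, ne_comm, Ne, Real.exp_eq_one_iff]
  rw [qnumR, pow_mul, hqt, ← Real.exp_nat_mul, expSubOneDiv, expSubOneDiv]
  rcases eq_or_ne (Real.exp (n * t)) 1 with h0 | h0
  · rw [h0]
    simp
  · have hn : (n : ℝ) ≠ 0 := by rintro hn; simp [hn] at h0
    have h0' : Real.exp (n * t) - 1 ≠ 0 := sub_ne_zero.mpr h0
    have h0'' : 1 - Real.exp (n * t) ≠ 0 := sub_ne_zero.mpr (Ne.symm h0)
    field_simp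
    ring

lemma fallR_div_qfallR (hqt : q⁻¹ ^ 2 = Real.exp t) (ht : t ≠ 0) {a k : ℕ} (hka : k ≤ a) :
    fallR a k / qfallR q a k =
      ∏ j ∈ range k, expSubOneDiv t * (expSubOneDiv ((a - j) * t))⁻¹ := by
  rw [fallR, qfallR, ← prod_div_distrib]
  refine prod_congr rfl fun j hj => ?_
  rw [← Nat.cast_sub ((mem_range.mp hj).le.trans hka), natCast_div_qnumR hqt ht]

lemma qBernoulliPolyR_eq_of_exp (hqt : q⁻¹ ^ 2 = Real.exp t) (ht : t ≠ 0) (m : ℕ) {h k : ℕ}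
    (hkh : k ≤ h) {ξ : ℝ} (hξ : q ^ (-2 * ξ) = Real.exp (ξ * t)) :
    qBernoulliPolyR m h k ξ q =
      (expSubOneDiv t)⁻¹ ^ m * (qBernoulliFwdDiff m h k ξ t / t ^ m) := by
  have hsub : 1 - Real.exp t = -(t * expSubOneDiv t) := by
    rw [expSubOneDiv]
    field_simp
    ring
  rw [qBernoulliPolyR, qBernoulliFwdDiff, hqt, hξ, hsub, mul_sum, sum_div, mul_sum]
  refine sum_congr rfl fun i hi => ?_
  have hi : i ≤ m := Nat.lt_succ_iff.mp (mem_range.mp hi)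
  have hsign : (-1 : ℝ) ^ m * (-1) ^ i = (-1) ^ (m - i) := by
    rw [← pow_add, ← Nat.sub_add_cancel hi, add_assoc, ← two_mul, pow_add, pow_mul]
    simp
  rw [fallR_div_qfallR hqt ht (hkh.trans (Nat.le_add_left h i)), qBernoulliTerm, neg_pow,
    ← Real.exp_nat_mul, ← hsign]
  have hpow : (-(t * expSubOneDiv t))⁻¹ ^ m = (-1) ^ m * ((expSubOneDiv t)⁻¹ ^ m / t ^ m) := by
    rw [neg_eq_neg_one_mul, mul_inv, mul_inv, mul_pow, mul_pow, inv_neg_one, div_eq_mul_inv,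
      inv_pow]
    ring
  push_cast
  simp only [hpow, add_sub_assoc, show (i : ℝ) * (ξ * t) = ξ * i * t by ring]
  ring

end Identity

lemma qBernoulliPolyR_eq {q : ℝ} (hq : 0 < q) (hq1 : q ≠ 1) (m : ℕ) {h k : ℕ} (hkh : k ≤ h)
    (ξ : ℝ) : qBernoulliPolyR m h k ξ q = (expSubOneDiv (-2 * Real.log q))⁻¹ ^ m *
      (qBernoulliFwdDiff m h k ξ (-2 * Real.log q) / (-2 * Real.log q) ^ m) := by
  refine qBernoulliPolyR_eq_of_exp ?_ ?_ m hkh ?_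
  · rw [← Real.exp_log (pow_pos (inv_pos.mpr hq) 2), Real.log_pow, Real.log_inv]
    ring_nf
  · simp [Real.log_ne_zero_of_pos_of_ne_one hq hq1]
  · rw [Real.rpow_def_of_pos hq]
    ring_nf

lemma tendsto_neg_two_mul_log :
    Tendsto (fun q => -2 * Real.log q) (𝓝[{q : ℝ | 0 < q ∧ q ≠ 1}] 1) (𝓝[≠] 0) := by
  refine tendsto_nhdsWithin_of_tendsto_nhds_of_eventually_within _ ?_ ?_
  · have := ((Real.continuousAt_log one_ne_zero).const_mul (-2)).tendsto
    simpa using this.mono_left nhdsWithin_le_nhds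
  · filter_upwards [self_mem_nhdsWithin] with q ⟨hq, hq1⟩
    simp [Real.log_ne_zero_of_pos_of_ne_one hq hq1]

theorem qBernoulliPolyR_tendsto_bernoulliPolyOrder_general (m h k : ℕ) (hhk : k ≤ h)
    (ξ : ℝ) :
    Filter.Tendsto (qBernoulliPolyR m h k ξ)
      (nhdsWithin 1 {q : ℝ | 0 < q ∧ q ≠ 1})
      (nhds (bernoulliPolyOrder k m ξ)) := by
  have hE : Tendsto (fun t => (expSubOneDiv t)⁻¹ ^ m) (𝓝[≠] 0) (𝓝 1) := by
    have := hasExpansion_expSubOneDiv.tendsto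
    rw [constantCoeff_expSubOneDivSeries] at this
    simpa using (this.inv₀ one_ne_zero).pow m
  have hlim := (hE.mul (tendsto_qBernoulliFwdDiff_div_pow m hhk ξ)).comp tendsto_neg_two_mul_log
  rw [one_mul] at hlim
  refine hlim.congr' ?_
  filter_upwards [self_mem_nhdsWithin] with q ⟨hq, hq1⟩
  exact (qBernoulliPolyR_eq hq hq1 m hhk ξ).symm

/-- As q → 1 within the positive reals different from 1, β_m^{(h,k)}(ξ; q) tends to the
order-k Bernoulli polynomial value B_m^{(k)}(ξ); in particular the limit is
independent of h. -/
theorem qBernoulliPolyR_tendsto_bernoulliPolyOrder (m h k : ℕ) (hk : 1 ≤ k) (hhk : k ≤ h)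
    (ξ : ℝ) :
    Filter.Tendsto (qBernoulliPolyR m h k ξ)
      (nhdsWithin 1 {q : ℝ | 0 < q ∧ q ≠ 1})
      (nhds (bernoulliPolyOrder k m ξ)) :=
  qBernoulliPolyR_tendsto_bernoulliPolyOrder_general m h k hhk ξ

end
end

section
/- Let R be a commutative ring, N ≥ 1 and m ≥ 0 integers, and u ∈ R. Then in the polynomial ring R[x_1,…,x_N] one has h_m(x_1,…,x_N) = Σ_{k=0}^{m} (−1)^k C(N−1+m, m−k) · h_k(u−x_1,…,u−x_N) · u^{m−k}, where h_j denotes the complete homogeneous symmetric polynomial of degree j and h_k(u−x_1,…,u−x_N) is obtained from h_k by substituting u − x_i for x_i. -/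
/-!
Expanding every factor of `∏ (xᵢ + a)^{dᵢ}` binomially and collecting the monomials `x^e` with
`|e| = k` gives the shift formula `h_m(x + a) = Σ_k C(N-1+m, m-k) h_k(x) a^{m-k}`: the coefficient
of `x^e a^{m-k}` is `Σ_{|f| = m-k} ∏ C(eᵢ+fᵢ, eᵢ)`, the coefficient of `t^{m-k}` in
`∏ (1-t)^{-(eᵢ+1)} = (1-t)^{-(k+N)}`. Substituting `xᵢ ↦ xᵢ - u = -(u - xᵢ)` with `a = u` and using
`h_k(-y) = (-1)^k h_k(y)` gives the theorem.
-/

noncomputable section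

/-- The complete homogeneous symmetric polynomial h_j in N variables: the sum of
all monomials of total degree j. -/
def hpoly (R : Type*) [CommRing R] (N j : ℕ) : MvPolynomial (Fin N) R :=
  ∑ d ∈ Finset.Nat.antidiagonalTuple N j,
    MvPolynomial.monomial (Finsupp.equivFunOnFinite.symm d) (1 : R)

open Finset MvPolynomial

section Combinatorics

variable {ι : Type*} [DecidableEq ι]

open PowerSeries in
theorem Finset.sum_piAntidiag_prod_choose_add {s : Finset ι} (hs : s.Nonempty) (e : ι → ℕ)
    (n : ℕ) :
    ∑ f ∈ s.piAntidiag n, ∏ i ∈ s, (e i + f i).choose (e i) =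
      (∑ i ∈ s, e i + #s - 1 + n).choose n := by
  -- over ℤ, since `mk_one_pow_eq_mk_choose_add` is stated for commutative rings
  have hpow : ∏ i ∈ s, (PowerSeries.mk 1 : ℤ⟦X⟧) ^ (e i + 1) =
      PowerSeries.mk 1 ^ (∑ i ∈ s, e i + #s - 1 + 1) := by
    rw [prod_pow_eq_pow_sum, sum_add_distrib, sum_const, smul_eq_mul, mul_one,
      Nat.sub_add_cancel (by have := hs.card_pos; omega)]
  have hcoeff := congrArg (coeff n) hpow
  simp only [coeff_prod, mk_one_pow_eq_mk_choose_add, coeff_mk] at hcoeff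
  rw [finsuppAntidiag, sum_map] at hcoeff
  rw [← Nat.choose_symm_add]
  exact_mod_cast (sum_attach (s.piAntidiag n)
    fun f ↦ ∏ i ∈ s, ((e i + f i).choose (e i) : ℤ)).symm.trans hcoeff

theorem Finset.sum_piAntidiag_sum_piFinset_range [Fintype ι] {M : Type*} [AddCommMonoid M]
    (m : ℕ) (F : (ι → ℕ) → (ι → ℕ) → M) :
    ∑ d ∈ univ.piAntidiag m, ∑ e ∈ Fintype.piFinset fun i ↦ range (d i + 1), F e d =
      ∑ k ∈ range (m + 1), ∑ e ∈ univ.piAntidiag k, ∑ f ∈ univ.piAntidiag (m - k), F e (e + f) := by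
  simp_rw [← sum_product', sum_sigma']
  refine sum_nbij' (fun x ↦ ⟨univ.sum x.2, (x.2, x.1 - x.2)⟩) (fun x ↦ ⟨x.2.1 + x.2.2, x.2.1⟩)
    ?_ ?_ ?_ ?_ ?_
  · rintro ⟨d, e⟩ h
    simp only [mem_sigma, mem_piAntidiag, Fintype.mem_piFinset, mem_range] at h
    obtain ⟨⟨hd, -⟩, he⟩ := h
    replace hd : ∑ i, d i = m := hd
    have hle (i : ι) : e i ≤ d i := Nat.lt_succ_iff.mp (he i)
    have hsum : ∑ i, (d i - e i) = m - ∑ i, e i := by rw [sum_tsub_distrib _ fun i _ ↦ hle i, hd]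
    have := sum_le_sum fun i (_ : i ∈ univ) ↦ hle i
    simp only [mem_sigma, mem_range, mem_product, mem_piAntidiag, mem_univ, implies_true,
      and_true, true_and, Pi.sub_apply]
    exact ⟨by omega, hsum⟩
  · rintro ⟨k, e, f⟩ h
    simp only [mem_sigma, mem_range, mem_product, mem_piAntidiag, mem_univ, implies_true,
      and_true] at h
    obtain ⟨hk, he, hf⟩ := h
    simp only [mem_sigma, Fintype.mem_piFinset, mem_range, mem_piAntidiag, mem_univ,
      implies_true, and_true, Pi.add_apply]
    exact ⟨by rw [sum_add_distrib, he, hf]; omega, fun i ↦ by omega⟩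
  · rintro ⟨d, e⟩ h
    simp only [mem_sigma, Fintype.mem_piFinset, mem_range] at h
    simp only [Sigma.mk.injEq, heq_eq_eq, and_true]
    ext i; have := h.2 i; simp only [Pi.add_apply, Pi.sub_apply]; omega
  · rintro ⟨k, e, f⟩ h
    simp only [mem_sigma, mem_piAntidiag, mem_product, mem_univ, implies_true,
      and_true] at h
    simp only [Sigma.mk.injEq, Prod.mk.injEq, h.2.1, heq_eq_eq, true_and]
    ext i; simp
  · rintro ⟨d, e⟩ h
    simp only [mem_sigma, Fintype.mem_piFinset, mem_range] at h
    congr; ext i; have := h.2 i; simp only [Pi.add_apply, Pi.sub_apply]; omega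

end Combinatorics

section CompleteHomogeneous

variable {R : Type*} [CommRing R] {N : ℕ}

theorem hpoly_eq_sum_prod_X_pow (j : ℕ) :
    hpoly R N j = ∑ d ∈ univ.piAntidiag j, ∏ i, X i ^ d i := by
  rw [hpoly, piAntidiag_univ_fin_eq_antidiagonalTuple]
  refine sum_congr rfl fun d _ ↦ ?_
  rw [monomial_eq, C_1, one_mul, Finsupp.prod_fintype _ _ fun i ↦ pow_zero _]
  rfl

theorem bind₁_hpoly {τ : Type*} (p : Fin N → MvPolynomial τ R) (j : ℕ) :
    bind₁ p (hpoly R N j) = ∑ d ∈ univ.piAntidiag j, ∏ i, p i ^ d i := by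
  simp [hpoly_eq_sum_prod_X_pow]

theorem bind₁_neg_hpoly {τ : Type*} (p : Fin N → MvPolynomial τ R) (j : ℕ) :
    bind₁ (fun i ↦ -p i) (hpoly R N j) = (-1) ^ j * bind₁ p (hpoly R N j) := by
  rw [bind₁_hpoly, bind₁_hpoly, mul_sum]
  refine sum_congr rfl fun d hd ↦ ?_
  simp_rw [neg_pow (p _), prod_mul_distrib, prod_pow_eq_pow_sum, (mem_piAntidiag.mp hd).1]

theorem bind₁_X_add_C_hpoly (hN : 1 ≤ N) (a : R) (m : ℕ) :
    bind₁ (fun i ↦ X i + C a) (hpoly R N m) =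
      ∑ k ∈ range (m + 1),
        ((N - 1 + m).choose (m - k) : MvPolynomial (Fin N) R) * hpoly R N k * C a ^ (m - k) := by
  have hne : (univ : Finset (Fin N)).Nonempty := univ_nonempty_iff.mpr ⟨⟨0, hN⟩⟩
  simp_rw [bind₁_hpoly, add_pow, prod_univ_sum, sum_piAntidiag_sum_piFinset_range]
  refine sum_congr rfl fun k hk ↦ ?_
  rw [hpoly_eq_sum_prod_X_pow, mul_sum, sum_mul]
  refine sum_congr rfl fun e he ↦ ?_
  calc
    _ = ∑ f ∈ univ.piAntidiag (m - k), (∏ i, X i ^ e i) * C a ^ (m - k) *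
          ((∏ i, (e i + f i).choose (e i) : ℕ) : MvPolynomial (Fin N) R) := by
      refine sum_congr rfl fun f hf ↦ ?_
      simp only [Pi.add_apply, add_tsub_cancel_left, prod_mul_distrib, prod_pow_eq_pow_sum,
        (mem_piAntidiag.mp hf).1, Nat.cast_prod]
    _ = _ := by
      have hdeg : k + N - 1 + (m - k) = N - 1 + m := by have := mem_range.mp hk; omega
      rw [← mul_sum, ← Nat.cast_sum, sum_piAntidiag_prod_choose_add hne, (mem_piAntidiag.mp he).1,
        card_univ, Fintype.card_fin, hdeg]
      ring

end CompleteHomogeneous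

/-- h_m(x) = Σ_{k=0}^{m} (−1)^k C(N−1+m, m−k) · h_k(u−x_1,…,u−x_N) · u^{m−k}. -/
theorem hpoly_eq_sum_shifted (R : Type*) [CommRing R] (N m : ℕ) (hN : 1 ≤ N) (u : R) :
    hpoly R N m =
      ∑ k ∈ Finset.range (m + 1),
        (-1) ^ k * (Nat.choose (N - 1 + m) (m - k) : MvPolynomial (Fin N) R) *
          (MvPolynomial.bind₁ (fun i : Fin N => MvPolynomial.C u - MvPolynomial.X i))
            (hpoly R N k) *
          MvPolynomial.C u ^ (m - k) := by
  have hshift := congrArg (bind₁ fun i ↦ -(C u - X i)) (bind₁_X_add_C_hpoly hN u m)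
  have hinv : (fun i ↦ bind₁ (fun j ↦ -(C u - X j)) (X i + C u)) = (X : Fin N → _) := by
    funext i; simp
  rw [bind₁_bind₁, hinv, bind₁_X_left, AlgHom.id_apply] at hshift
  rw [hshift, map_sum]
  refine sum_congr rfl fun k _ ↦ ?_
  rw [map_mul, map_mul, map_natCast, map_pow, bind₁_C_right, bind₁_neg_hpoly]
  ring

end
end

section
/- Let N ≥ 1 and m ≥ 2. The partial trace of the symmetrizer matrix S^{(m)} over the last tensor factor satisfies: for all I, J ∈ {1,…,N}^{m−1}, Σ_{t=1}^{N} S^{(m)}_{(I,t),(J,t)} = ((N−1+m)/m)·S^{(m−1)}_{I,J}, i.e. Tr_{m,m}(S^{(m)}) = ((N−1+m)/m)·S^{(m−1)}. -/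
/-!
STATEMENT 17: For N ≥ 1 and m ≥ 2, the partial trace of the symmetrizer matrix
S^{(m)} over the last tensor factor satisfies
Σ_{t=1}^{N} S^{(m)}_{(I,t),(J,t)} = ((N−1+m)/m)·S^{(m−1)}_{I,J}.
(We state this for m+1 with m ≥ 1, i.e. for S^{(m+1)} and S^{(m)}; (I,t) is
`Fin.snoc I t`.)
-/

noncomputable section

/-- The permutation matrix P_α, indexed by tuples in {1,…,N}^m (modelled as
functions Fin m → Fin N): (P_α)_{I,J} = Π_k δ(I(α(k)), J(k)). -/
def Pmat (N m : ℕ) (α : Equiv.Perm (Fin m)) :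
    Matrix (Fin m → Fin N) (Fin m → Fin N) ℚ := fun I J =>
  ∏ k : Fin m, (if I (α k) = J k then 1 else 0)

/-- The symmetrizer matrix S^{(m)} = (1/m!)·Σ_{α ∈ S_m} P_α. -/
def Ssym (N m : ℕ) : Matrix (Fin m → Fin N) (Fin m → Fin N) ℚ :=
  (m.factorial : ℚ)⁻¹ • ∑ α : Equiv.Perm (Fin m), Pmat N m α

/-- Relabeling invariance of Pmat. -/
lemma Pmat_conj (N n : ℕ) (σ α : Equiv.Perm (Fin n)) (K L : Fin n → Fin N) :
    Pmat N n (σ⁻¹ * α * σ) (K ∘ σ) (L ∘ σ) = Pmat N n α K L := by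
  unfold Pmat
  rw [← Equiv.prod_comp σ (fun k => if K (α k) = L k then (1:ℚ) else 0)]
  refine Finset.prod_congr rfl fun k _ => ?_
  simp [Equiv.Perm.mul_apply]

lemma sumP_relabel (N n : ℕ) (σ : Equiv.Perm (Fin n)) (K L : Fin n → Fin N) :
    ∑ α : Equiv.Perm (Fin n), Pmat N n α (K ∘ σ) (L ∘ σ)
      = ∑ α : Equiv.Perm (Fin n), Pmat N n α K L := by
  refine Fintype.sum_equiv ((Equiv.mulRight σ⁻¹).trans (Equiv.mulLeft σ)) _ _ fun α => ?_
  have h := Pmat_conj N n σ (σ * α * σ⁻¹) K L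
  have h2 : σ⁻¹ * (σ * α * σ⁻¹) * σ = α := by group
  rw [h2] at h
  simpa [mul_assoc] using h

/-- Key computation with `Fin.cons` and `decomposeFin`. -/
lemma key (N m : ℕ) (I J : Fin m → Fin N) :
    ∑ t : Fin N, ∑ α : Equiv.Perm (Fin (m+1)),
        Pmat N (m+1) α (Fin.cons t I) (Fin.cons t J)
      = ((N : ℚ) + m) * ∑ β : Equiv.Perm (Fin m), Pmat N m β I J := by
  have hterm : ∀ (p : Fin (m+1)) (β : Equiv.Perm (Fin m)),
      ∑ t : Fin N, Pmat N (m+1) (Equiv.Perm.decomposeFin.symm (p, β))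
          (Fin.cons t I) (Fin.cons t J)
        = (if p = 0 then (N : ℚ) else 1) * Pmat N m β I J := by
    intro p β
    have hPm : ∀ t : Fin N, Pmat N (m+1) (Equiv.Perm.decomposeFin.symm (p, β))
        (Fin.cons t I) (Fin.cons t J)
        = (if (Fin.cons t I : Fin (m+1) → Fin N) p = t then (1:ℚ) else 0) *
          ∏ i : Fin m, (if (Fin.cons t I : Fin (m+1) → Fin N)
              (Equiv.swap 0 p (β i).succ) = J i then (1:ℚ) else 0) := by
      intro t
      unfold Pmat
      rw [Fin.prod_univ_succ]
      simp [Equiv.Perm.decomposeFin_symm_apply_zero,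
        Equiv.Perm.decomposeFin_symm_apply_succ]
    induction p using Fin.cases with
    | zero =>
      simp only [hPm, if_pos rfl]
      have : ∀ t : Fin N, ((if (Fin.cons t I : Fin (m+1) → Fin N) 0 = t then (1:ℚ) else 0) *
          ∏ i : Fin m, (if (Fin.cons t I : Fin (m+1) → Fin N)
              (Equiv.swap 0 0 (β i).succ) = J i then (1:ℚ) else 0)) = Pmat N m β I J := by
        intro t
        simp [Equiv.swap_self, Pmat]
      rw [Finset.sum_congr rfl fun t _ => this t]
      simp [Finset.card_univ, mul_comm]
    | succ q =>
      have hne : (q.succ : Fin (m+1)) ≠ 0 := Fin.succ_ne_zero q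
      simp only [hPm, if_neg hne, one_mul]
      have hcons : ∀ t : Fin N, (Fin.cons t I : Fin (m+1) → Fin N) q.succ = I q := by
        intro t; simp
      have hprod : ∀ t : Fin N,
          (∏ i : Fin m, (if (Fin.cons t I : Fin (m+1) → Fin N)
              (Equiv.swap 0 q.succ (β i).succ) = J i then (1:ℚ) else 0))
          = ∏ i : Fin m, (if (if β i = q then t else I (β i)) = J i then (1:ℚ) else 0) := by
        intro t
        refine Finset.prod_congr rfl fun i _ => ?_
        by_cases h : β i = q
        · subst h; simp [Equiv.swap_apply_right]
        · rw [Equiv.swap_apply_of_ne_of_ne (Fin.succ_ne_zero _)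
            (fun hc => h (Fin.succ_injective _ hc))]
          simp [h]
      calc ∑ t : Fin N, ((if (Fin.cons t I : Fin (m+1) → Fin N) q.succ = t then (1:ℚ) else 0) *
              ∏ i : Fin m, (if (Fin.cons t I : Fin (m+1) → Fin N)
                  (Equiv.swap 0 q.succ (β i).succ) = J i then (1:ℚ) else 0))
          = ∑ t : Fin N, (if I q = t then
              (∏ i : Fin m, (if (if β i = q then t else I (β i)) = J i then (1:ℚ) else 0))
              else 0) := by
            refine Finset.sum_congr rfl fun t _ => ?_
            rw [hcons t, hprod t, ite_mul, one_mul, zero_mul]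
        _ = ∏ i : Fin m, (if (if β i = q then I q else I (β i)) = J i then (1:ℚ) else 0) := by
            rw [Finset.sum_ite_eq]
            simp
        _ = Pmat N m β I J := by
            unfold Pmat
            refine Finset.prod_congr rfl fun i _ => ?_
            by_cases h : β i = q
            · simp [h]
            · simp [h]
  rw [Finset.sum_comm]
  rw [← Fintype.sum_equiv Equiv.Perm.decomposeFin.symm
    (fun pβ => ∑ t : Fin N, Pmat N (m+1) (Equiv.Perm.decomposeFin.symm pβ)
        (Fin.cons t I) (Fin.cons t J))
    (fun α => ∑ t : Fin N, Pmat N (m+1) α (Fin.cons t I) (Fin.cons t J))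
    (fun pβ => rfl)]
  rw [Fintype.sum_prod_type]
  simp only [hterm]
  rw [Fin.sum_univ_succ]
  have htail : ∑ q : Fin m, ∑ β : Equiv.Perm (Fin m),
      (if (q.succ : Fin (m+1)) = 0 then (N:ℚ) else 1) * Pmat N m β I J
      = (m:ℚ) * ∑ β : Equiv.Perm (Fin m), Pmat N m β I J := by
    simp [Fin.succ_ne_zero, Finset.card_univ, mul_comm]
  have hhead : ∑ β : Equiv.Perm (Fin m),
      (if (0 : Fin (m+1)) = 0 then (N:ℚ) else 1) * Pmat N m β I J
      = (N:ℚ) * ∑ β : Equiv.Perm (Fin m), Pmat N m β I J := by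
    simp [Finset.mul_sum]
  rw [hhead, htail, add_mul]

/-- Tr_{m,m}(S^{(m)}) = ((N−1+m)/m)·S^{(m−1)}, stated for sizes m+1 and m, m ≥ 1. -/
theorem partial_trace_symmetrizer (N m : ℕ) (hN : 1 ≤ N) (hm : 1 ≤ m)
    (I J : Fin m → Fin N) :
    ∑ t : Fin N, Ssym N (m + 1) (Fin.snoc I t) (Fin.snoc J t) =
      (((N : ℚ) - 1 + (m + 1)) / (m + 1)) * Ssym N m I J := by
  have hsnoc : ∀ (K : Fin m → Fin N) (t : Fin N),
      (Fin.snoc K t : Fin (m+1) → Fin N) ∘ (Fin.revPerm : Equiv.Perm (Fin (m+1)))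
        = Fin.cons t (K ∘ Fin.revPerm) := by
    intro K t
    funext k
    induction k using Fin.cases with
    | zero => simp [Fin.rev_zero]
    | succ i => simp [Fin.rev_succ]
  have hI : (I ∘ (Fin.revPerm : Equiv.Perm (Fin m))) ∘ (Fin.revPerm : Equiv.Perm (Fin m)) = I := by
    funext k; simp
  have hJ : (J ∘ (Fin.revPerm : Equiv.Perm (Fin m))) ∘ (Fin.revPerm : Equiv.Perm (Fin m)) = J := by
    funext k; simp
  have L1 : ∀ t : Fin N,
      Ssym N (m+1) (Fin.snoc I t) (Fin.snoc J t)
        = ((m+1).factorial : ℚ)⁻¹ * ∑ α : Equiv.Perm (Fin (m+1)),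
            Pmat N (m+1) α (Fin.cons t (I ∘ Fin.revPerm)) (Fin.cons t (J ∘ Fin.revPerm)) := by
    intro t
    rw [← hsnoc I t, ← hsnoc J t, sumP_relabel]
    simp [Ssym, Matrix.smul_apply, Matrix.sum_apply]
  have L2 : Ssym N m I J = (m.factorial : ℚ)⁻¹ * ∑ β : Equiv.Perm (Fin m),
      Pmat N m β (I ∘ Fin.revPerm) (J ∘ Fin.revPerm) := by
    have h := sumP_relabel N m Fin.revPerm (I ∘ Fin.revPerm) (J ∘ Fin.revPerm)
    rw [hI, hJ] at h
    rw [← h]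
    simp [Ssym, Matrix.smul_apply, Matrix.sum_apply]
  rw [Finset.sum_congr rfl fun t _ => L1 t, ← Finset.mul_sum, key, L2]
  have h1 : ((m+1).factorial : ℚ) = (m+1) * m.factorial := by
    rw [Nat.factorial_succ]; push_cast; ring
  have h2 : (m.factorial : ℚ) ≠ 0 := Nat.cast_ne_zero.mpr m.factorial_ne_zero
  have h3 : ((m:ℚ)+1) ≠ 0 := by positivity
  rw [h1]
  field_simp
  try ring


end
end
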